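/- arXiv:2006.00392 — 3 statements merged into one kernel-verified Lean document; each statement's English description precedes it below -/
import Mathlib

section
/- Let f(z) = z + u·ReLU(wᵀz + b) with u, w ∈ ℝ^d, b ∈ ℝ, and uᵀw > −1. Then f is a bijection of ℝ^d, with inverse given by f⁻¹(y) = y if wᵀy + b < 0, and f⁻¹(y) = y − u·(wᵀy + b)/(1 + uᵀw) if wᵀy + b ≥ 0. -/
open scoped RealInnerProductSpace

/-- A ReLU planar flow `f(z) = z + ReLU(⟪w,z⟫+b) • u` with `⟪u,w⟫ > -1` is a
bijection of `ℝ^d`, and the stated piecewise map `g` is its inverse. -/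
theorem relu_planar_flow_bijective {d : ℕ} (u w : EuclideanSpace ℝ (Fin d)) (b : ℝ)
    (huw : ⟪u, w⟫ > -1)
    (f g : EuclideanSpace ℝ (Fin d) → EuclideanSpace ℝ (Fin d))
    (hf : ∀ z, f z = z + max (⟪w, z⟫ + b) 0 • u)
    (hg : ∀ y, g y = if ⟪w, y⟫ + b < 0 then y else y - ((⟪w, y⟫ + b) / (1 + ⟪u, w⟫)) • u) :
    Function.Bijective f ∧ (∀ y, f (g y) = y) ∧ (∀ z, g (f z) = z) := by
  have hc : (0:ℝ) < 1 + ⟪u, w⟫ := by linarith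
  have hwu : ⟪w, u⟫ = ⟪u, w⟫ := real_inner_comm u w
  have hgf : ∀ z, g (f z) = z := by
    intro z
    set t := ⟪w, z⟫ + b with ht
    rcases lt_or_ge t 0 with h | h
    · have hmax : max t 0 = 0 := max_eq_right h.le
      have hfz : f z = z := by rw [hf, hmax, zero_smul, add_zero]
      rw [hfz, hg, if_pos (by rw [← ht]; exact h)]
    · have hmax : max t 0 = t := max_eq_left h
      have hfz : f z = z + t • u := by rw [hf, hmax]
      have hinner : ⟪w, f z⟫ + b = t * (1 + ⟪u, w⟫) := by
        rw [hfz, inner_add_right, real_inner_smul_right, hwu, ht]; ring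
      have hge : ¬ (⟪w, f z⟫ + b < 0) := by
        rw [hinner]; exact not_lt.mpr (mul_nonneg h hc.le)
      rw [hg, if_neg hge, hinner, hfz]
      rw [mul_div_assoc, div_self hc.ne', mul_one]
      abel
  have hfg : ∀ y, f (g y) = y := by
    intro y
    set s := ⟪w, y⟫ + b with hs
    rcases lt_or_ge s 0 with h | h
    · have hgy : g y = y := by rw [hg, if_pos (by rw [← hs]; exact h)]
      rw [hgy, hf, ← hs, max_eq_right h.le, zero_smul, add_zero]
    · have hgy : g y = y - (s / (1 + ⟪u, w⟫)) • u := by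
        rw [hg, if_neg (not_lt.mpr (by rw [← hs]; exact h))]
      have hinner : ⟪w, g y⟫ + b = s / (1 + ⟪u, w⟫) := by
        have alg : ∀ a c : ℝ, 0 < 1 + c → a - (a + b) / (1 + c) * c + b = (a + b) / (1 + c) := by
          intro a c hc0
          field_simp
          ring
        rw [hgy, inner_sub_right, real_inner_smul_right, hwu, hs]
        exact alg ⟪w, y⟫ ⟪u, w⟫ hc
      have hpos : (0:ℝ) ≤ s / (1 + ⟪u, w⟫) := div_nonneg h hc.le
      rw [hf, hinner, max_eq_left hpos, hgy]
      abel
  exact ⟨Function.bijective_iff_has_inverse.mpr ⟨g, hgf, hfg⟩, hfg, hgf⟩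
end

section
/- Let p, q, q₁, …, q_T be probability densities on ℝ^d with q_t = f_t # q_{t−1} (q₀ = q), where each f_t is a diffeomorphism. Suppose sup_t ∫ | |det J_{f_t}(z)| p(f_t(z)) − p(z) | dz ≤ L. Then ‖p − q_T‖₁ ≥ ‖p − q‖₁ − T·L. In particular, if ‖p − q_T‖₁ ≤ ε then T ≥ (‖p − q‖₁ − ε)/L. -/
open MeasureTheory

/-! Pulling `p` back through the layer `f` and using the push-forward relation
`q' (f z) |det Df(z)| = q z`, the triangle inequality splits `|p - q|` pointwise into
`||det Df| (p ∘ f) - p|` plus `|det Df| |p ∘ f - q' ∘ f|`, and the integral of the latter is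
`‖p - q'‖₁` by the change of variables formula. So one layer lowers the L¹ distance to `p`
by at most `L`, and `T` layers by at most `T L`. -/

section ChangeOfVariables

variable {E F : Type*} [NormedAddCommGroup E] [NormedSpace ℝ E] [FiniteDimensional ℝ E]
  [MeasurableSpace E] [BorelSpace E] (μ : Measure E) [μ.IsAddHaarMeasure]
  [NormedAddCommGroup F] [NormedSpace ℝ F]
  {f : E → E} (hf : Differentiable ℝ f) (hbij : Function.Bijective f)

include hf hbij

theorem integral_eq_integral_abs_det_fderiv_smul_comp (g : E → F) :
    ∫ x, g x ∂μ = ∫ z, |(fderiv ℝ f z).det| • g (f z) ∂μ := by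
  simpa [hbij.surjective.range_eq] using integral_image_eq_integral_abs_det_fderiv_smul μ
    MeasurableSet.univ (fun x _ => (hf x).hasFDerivAt.hasFDerivWithinAt) hbij.injective.injOn g

theorem MeasureTheory.Integrable.abs_det_fderiv_smul_comp {g : E → F} (hg : Integrable g μ) :
    Integrable (fun z => |(fderiv ℝ f z).det| • g (f z)) μ := by
  have := (integrableOn_image_iff_integrableOn_abs_det_fderiv_smul μ MeasurableSet.univ
    (fun x _ => (hf x).hasFDerivAt.hasFDerivWithinAt) hbij.injective.injOn g).mp
  simpa [hbij.surjective.range_eq] using this hg.integrableOn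

end ChangeOfVariables

lemma abs_sub_mul_le_abs_mul_sub_add_mul_abs_sub {j : ℝ} (hj : 0 ≤ j) (a b c : ℝ) :
    |a - c * j| ≤ |j * b - a| + j * |b - c| := by
  calc |a - c * j| = |-(j * b - a) + j * (b - c)| := by ring_nf
    _ ≤ |-(j * b - a)| + |j * (b - c)| := abs_add_le _ _
    _ = |j * b - a| + j * |b - c| := by rw [abs_neg, abs_mul, abs_of_nonneg hj]

section SingleStep

variable {E : Type*} [NormedAddCommGroup E] [NormedSpace ℝ E] [FiniteDimensional ℝ E]
  [MeasurableSpace E] [BorelSpace E] {μ : Measure E} [μ.IsAddHaarMeasure]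

theorem integral_abs_sub_le_of_pushforward {f : E → E} (hf : Differentiable ℝ f)
    (hbij : Function.Bijective f) {p q q' : E → ℝ}
    (hpush : ∀ z, q' (f z) * |(fderiv ℝ f z).det| = q z)
    (hq : Integrable (fun z => |p z - q z|) μ) (hq' : Integrable (fun z => |p z - q' z|) μ)
    (hJ : Integrable (fun z => |(|(fderiv ℝ f z).det| * p (f z)) - p z|) μ) :
    ∫ z, |p z - q z| ∂μ ≤
      (∫ z, |(|(fderiv ℝ f z).det| * p (f z)) - p z| ∂μ) + ∫ z, |p z - q' z| ∂μ := by
  have hcov := integral_eq_integral_abs_det_fderiv_smul_comp μ hf hbij fun z => |p z - q' z|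
  have hcovInt := hq'.abs_det_fderiv_smul_comp μ hf hbij
  simp only [smul_eq_mul] at hcov hcovInt
  rw [hcov, ← integral_add hJ hcovInt]
  refine integral_mono hq (hJ.add hcovInt) fun z => ?_
  rw [← hpush z]
  exact abs_sub_mul_le_abs_mul_sub_add_mul_abs_sub (abs_nonneg _) _ _ _

end SingleStep

lemma sub_nat_mul_le_of_le_add_succ {a : ℕ → ℝ} {L : ℝ} (h : ∀ t, a t ≤ L + a (t + 1)) :
    ∀ T : ℕ, a 0 - T * L ≤ a T
  | 0 => by simp
  | T + 1 => by
    push_cast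
    linarith [sub_nat_mul_le_of_le_add_succ h T, h T]

theorem depth_lower_bound_general {d : ℕ} (T : ℕ) (L ε : ℝ) (hL : 0 < L)
    (f : ℕ → EuclideanSpace ℝ (Fin d) → EuclideanSpace ℝ (Fin d))
    (hfd : ∀ t, Differentiable ℝ (f t)) (hfb : ∀ t, Function.Bijective (f t))
    (q : ℕ → EuclideanSpace ℝ (Fin d) → ℝ) (p : EuclideanSpace ℝ (Fin d) → ℝ)
    (hpush : ∀ t z, q (t + 1) (f (t + 1) z) * |(fderiv ℝ (f (t + 1)) z).det| = q t z)
    (hint : ∀ t, Integrable (fun z => |p z - q t z|))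
    (hintJ : ∀ t, Integrable (fun z => |(|(fderiv ℝ (f t) z).det| * p (f t z)) - p z|))
    (hstep : ∀ t, (∫ z, |(|(fderiv ℝ (f t) z).det| * p (f t z)) - p z|) ≤ L) :
    (∫ z, |p z - q 0 z|) - T * L ≤ (∫ z, |p z - q T z|) ∧
      ((∫ z, |p z - q T z|) ≤ ε → ((∫ z, |p z - q 0 z|) - ε) / L ≤ T) := by
  have hlayer (t : ℕ) : ∫ z, |p z - q t z| ≤ L + ∫ z, |p z - q (t + 1) z| :=
    (integral_abs_sub_le_of_pushforward (hfd (t + 1)) (hfb (t + 1)) (hpush t) (hint t)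
      (hint (t + 1)) (hintJ (t + 1))).trans (add_le_add_left (hstep (t + 1)) _)
  have hdepth := sub_nat_mul_le_of_le_add_succ hlayer T
  refine ⟨hdepth, fun hε => ?_⟩
  rw [div_le_iff₀ hL]
  linarith

/-- Telescoping lower bound on flow depth: if each layer can decrease the L¹
distance to `p` by at most `L`, then after `T` layers
`‖p − q_T‖₁ ≥ ‖p − q₀‖₁ − T·L`; in particular `‖p − q_T‖₁ ≤ ε` forces
`T ≥ (‖p − q₀‖₁ − ε)/L`. -/
theorem depth_lower_bound {d : ℕ} (T : ℕ) (L ε : ℝ) (hL : 0 < L)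
    (f : ℕ → EuclideanSpace ℝ (Fin d) → EuclideanSpace ℝ (Fin d))
    (hfd : ∀ t, Differentiable ℝ (f t)) (hfb : ∀ t, Function.Bijective (f t))
    (hJ : ∀ t z, (fderiv ℝ (f t) z).det ≠ 0)
    (q : ℕ → EuclideanSpace ℝ (Fin d) → ℝ) (p : EuclideanSpace ℝ (Fin d) → ℝ)
    (hp0 : ∀ z, 0 ≤ p z) (hq0 : ∀ t z, 0 ≤ q t z)
    (hp1 : ∫ z, p z = 1) (hq1 : ∀ t, ∫ z, q t z = 1)
    (hpush : ∀ t z, q (t + 1) (f (t + 1) z) * |(fderiv ℝ (f (t + 1)) z).det| = q t z)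
    (hint : ∀ t, Integrable (fun z => |p z - q t z|))
    (hintJ : ∀ t, Integrable (fun z => |(|(fderiv ℝ (f t) z).det| * p (f t z)) - p z|))
    (hstep : ∀ t, (∫ z, |(|(fderiv ℝ (f t) z).det| * p (f t z)) - p z|) ≤ L) :
    (∫ z, |p z - q 0 z|) - T * L ≤ (∫ z, |p z - q T z|) ∧
      ((∫ z, |p z - q T z|) ≤ ε → ((∫ z, |p z - q 0 z|) - ε) / L ≤ T) :=
  depth_lower_bound_general T L ε hL f hfd hfb q p hpush hint hintJ hstep
end

section
/- Let u, w ∈ ℝ^d with 1 + uᵀw > 0, and define f₁(z) = z + ReLU(wᵀz)·u and f₂(z) = z − ReLU(−wᵀz)·u. Then f₂ ∘ f₁ is the linear map z ↦ (I + uwᵀ)z. Consequently, any rank-one modification I + uwᵀ of the identity with positive determinant is a composition of two ReLU planar flows. -/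
/-!
The first flow moves `z` only when `wᵀz ≥ 0`, the second only when `wᵀz < 0`, and each moves
it by `(wᵀz) u`. So on `wᵀz < 0` the first is the identity and the second applies `I + uwᵀ`;
on `wᵀz ≥ 0` the first applies `I + uwᵀ`, after which the second is the identity because
`wᵀ(I + uwᵀ)z = (1 + uᵀw) wᵀz ≥ 0`. The determinant is the matrix determinant lemma.
-/

open Matrix

namespace Matrix

variable {R n : Type*} [CommRing R] [Fintype n]

theorem one_add_vecMulVec_mulVec [DecidableEq n] (u w z : n → R) :
    (1 + vecMulVec u w) *ᵥ z = z + (w ⬝ᵥ z) • u := by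
  rw [add_mulVec, one_mulVec, vecMulVec_mulVec, op_smul_eq_smul]

theorem det_one_add_vecMulVec [DecidableEq n] (u w : n → R) :
    (1 + vecMulVec u w).det = 1 + u ⬝ᵥ w := by
  rw [vecMulVec_eq (Fin 1), det_one_add_replicateCol_mul_replicateRow, dotProduct_comm]

theorem dotProduct_add_dotProduct_smul (u w z : n → R) :
    w ⬝ᵥ (z + (w ⬝ᵥ z) • u) = (1 + u ⬝ᵥ w) * (w ⬝ᵥ z) := by
  rw [dotProduct_add, dotProduct_smul, smul_eq_mul, dotProduct_comm w u]
  ring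

end Matrix

section ReLUPlanarFlow

variable {R n : Type*} [CommRing R] [LinearOrder R] [Fintype n]

def reluPlanarFlowPos (u w z : n → R) : n → R := z + max (w ⬝ᵥ z) 0 • u

def reluPlanarFlowNeg (u w z : n → R) : n → R := z - max (-(w ⬝ᵥ z)) 0 • u

variable {u w z : n → R}

theorem reluPlanarFlowPos_of_nonneg (h : 0 ≤ w ⬝ᵥ z) :
    reluPlanarFlowPos u w z = z + (w ⬝ᵥ z) • u := by
  rw [reluPlanarFlowPos, max_eq_left h]

theorem reluPlanarFlowPos_of_nonpos (h : w ⬝ᵥ z ≤ 0) : reluPlanarFlowPos u w z = z := by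
  rw [reluPlanarFlowPos, max_eq_right h, zero_smul, add_zero]

theorem reluPlanarFlowNeg_of_nonneg [IsOrderedRing R] (h : 0 ≤ w ⬝ᵥ z) : reluPlanarFlowNeg u w z = z := by
  rw [reluPlanarFlowNeg, max_eq_right (neg_nonpos.mpr h), zero_smul, sub_zero]

theorem reluPlanarFlowNeg_of_nonpos [IsOrderedRing R] (h : w ⬝ᵥ z ≤ 0) :
    reluPlanarFlowNeg u w z = z + (w ⬝ᵥ z) • u := by
  rw [reluPlanarFlowNeg, max_eq_left (neg_nonneg.mpr h), neg_smul, sub_neg_eq_add]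

theorem reluPlanarFlowNeg_reluPlanarFlowPos [IsOrderedRing R] (huw : 0 ≤ 1 + u ⬝ᵥ w) :
    reluPlanarFlowNeg u w (reluPlanarFlowPos u w z) = z + (w ⬝ᵥ z) • u := by
  rcases le_total 0 (w ⬝ᵥ z) with h | h
  · rw [reluPlanarFlowPos_of_nonneg h]
    apply reluPlanarFlowNeg_of_nonneg
    rw [dotProduct_add_dotProduct_smul]
    exact mul_nonneg huw h
  · rw [reluPlanarFlowPos_of_nonpos h, reluPlanarFlowNeg_of_nonpos h]

end ReLUPlanarFlow

/-- Two ReLU planar flows compose to the rank-one modification `I + uwᵀ` of the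
identity (assuming `1 + uᵀw > 0`). -/
theorem relu_planar_flows_compose_to_rank_one {d : ℕ}
    (u w : Fin d → ℝ) (huw : 0 < 1 + u ⬝ᵥ w)
    (f₁ f₂ : (Fin d → ℝ) → (Fin d → ℝ))
    (hf₁ : ∀ z, f₁ z = z + max (w ⬝ᵥ z) 0 • u)
    (hf₂ : ∀ z, f₂ z = z - max (-(w ⬝ᵥ z)) 0 • u) :
    (∀ z, f₂ (f₁ z) = (1 + vecMulVec u w).mulVec z) ∧
      (1 + vecMulVec u w).det = 1 + u ⬝ᵥ w := by
  obtain rfl : f₁ = reluPlanarFlowPos u w := funext hf₁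
  obtain rfl : f₂ = reluPlanarFlowNeg u w := funext hf₂
  refine ⟨fun z => ?_, det_one_add_vecMulVec u w⟩
  rw [reluPlanarFlowNeg_reluPlanarFlowPos huw.le, one_add_vecMulVec_mulVec]
end
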